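/- Let (W,S) be a finitely generated odd-angled Coxeter system with Coxeter matrix (m_{ij}). Suppose there exist three distinct indices a,b,c such that m_{ab} and m_{ac} are finite, divisible by 5 and not divisible by 3, and m_{bc} is finite and divisible by 3; suppose further that for every other unordered pair of distinct indices {i,j}, either m_{ij} = ∞ or 3 divides m_{ij}. Then W has a proper finite-index subgroup generated by reflections. -/

import Mathlib

/-!
The group `W` acts on a finite set `V` (a cycle of length `2 M b c` decorated with pendant
paths) so that `s a`, `s b`, `s c` act as involutions whose pairwise products have orders
dividing `M a b`, `M a c`, `M b c`, and every further generator has products of order `3` with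
all the others; this is where the divisibility hypotheses enter. The action comes with a
transversal `w : V → W`, with `w v₀ = 1` and `w (s i • v) = w v * s i` whenever `s i` moves `v`.
Inducting on words, every `g : W` lies in `H * w (g⁻¹ • v₀)`, where `H` is generated by the
reflections fixing `v₀`: when `s i` fixes `v`, the reflection `w v * s i * (w v)⁻¹` fixes `v₀`.
Hence `H` has finite index, and `H ≠ ⊤` because `s a` moves `v₀`.
-/

theorem mul_pow_eq_one_comm {G : Type*} [Group G] {u v : G} {n : ℕ} (h : (u * v) ^ n = 1) :
    (v * u) ^ n = 1 := by
  have key : v * (u * v) ^ n = (v * u) ^ n * v :=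
    (show SemiconjBy v (u * v) (v * u) from (mul_assoc v u v).symm).pow_right n
  simpa [h] using key

theorem pow_eq_one_of_dvd_or_eq_zero {G : Type*} [Monoid G] {g : G} {d n : ℕ} (hg : g ^ d = 1)
    (hn : n = 0 ∨ d ∣ n) : g ^ n = 1 := by
  rcases hn with rfl | ⟨k, rfl⟩
  · exact pow_zero g
  · rw [pow_mul, hg, one_pow]

namespace CoxeterSystem

variable {B W X : Type*} [Group W] {M : CoxeterMatrix B} (cs : CoxeterSystem M W)
  (f : W →* Equiv.Perm X) (x₀ : X)

def fixingReflections : Set W := {t | cs.IsReflection t ∧ f t x₀ = x₀}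

theorem apply_eq_of_mem_closure_fixingReflections {h : W}
    (hh : h ∈ Subgroup.closure (cs.fixingReflections f x₀)) : f h x₀ = x₀ := by
  have hle : Subgroup.closure (cs.fixingReflections f x₀) ≤
      (MulAction.stabilizer (Equiv.Perm X) x₀).comap f :=
    (Subgroup.closure_le _).mpr fun t ht => ht.2
  exact hle hh

variable {cs f x₀} {w : X → W} (hw₀ : w x₀ = 1)
  (hw : ∀ i v, f (cs.simple i) v ≠ v → w (f (cs.simple i) v) = w v * cs.simple i)
include hw₀ hw

theorem exists_mem_closure_fixingReflections_mul (g : W) :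
    ∃ h ∈ Subgroup.closure (cs.fixingReflections f x₀), g = h * w ((f g)⁻¹ x₀) := by
  induction g using cs.simple_induction_right with
  | one => exact ⟨1, one_mem _, by simp [hw₀]⟩
  | mul_simple_right g i ih =>
    obtain ⟨h, hh, hg⟩ := ih
    set v := (f g)⁻¹ x₀
    have hsv : (f (g * cs.simple i))⁻¹ x₀ = f (cs.simple i) v := by
      rw [map_mul, mul_inv_rev, Equiv.Perm.mul_apply, ← map_inv, cs.inv_simple]
    rw [hsv]
    by_cases hfix : f (cs.simple i) v = v
    · have hwv : f (w v) v = x₀ := by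
        rw [eq_inv_mul_of_mul_eq hg.symm, map_mul, map_inv, Equiv.Perm.mul_apply,
          Equiv.Perm.inv_eq_iff_eq, apply_eq_of_mem_closure_fixingReflections cs f x₀ hh]
        simp [v]
      have hfixing : w v * cs.simple i * (w v)⁻¹ ∈ cs.fixingReflections f x₀ := by
        refine ⟨⟨w v, i, rfl⟩, ?_⟩
        rw [map_mul, map_mul, map_inv, Equiv.Perm.mul_apply, Equiv.Perm.mul_apply,
          Equiv.Perm.inv_eq_iff_eq.mpr hwv.symm, hfix, hwv]
      refine ⟨h * (w v * cs.simple i * (w v)⁻¹),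
        mul_mem hh (Subgroup.subset_closure hfixing), ?_⟩
      rw [hfix, hg]
      group
    · exact ⟨h, hh, by rw [hw i v hfix, hg, mul_assoc]⟩

theorem one_lt_index_closure_fixingReflections [Finite X] (i : B)
    (hi : f (cs.simple i) x₀ ≠ x₀) :
    1 < (Subgroup.closure (cs.fixingReflections f x₀)).index := by
  set H := Subgroup.closure (cs.fixingReflections f x₀)
  have hsurj : Function.Surjective fun v => (QuotientGroup.mk (w v)⁻¹ : W ⧸ H) := by
    intro q
    obtain ⟨g, rfl⟩ := QuotientGroup.mk_surjective q
    obtain ⟨h, hh, hg⟩ := exists_mem_closure_fixingReflections_mul hw₀ hw g⁻¹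
    refine ⟨(f g⁻¹)⁻¹ x₀, QuotientGroup.eq.mpr ?_⟩
    rw [inv_inv, eq_inv_mul_of_mul_eq hg.symm, inv_mul_cancel_right]
    exact inv_mem hh
  have : Finite (W ⧸ H) := Finite.of_surjective _ hsurj
  refine Subgroup.one_lt_index_of_ne_top fun hH => hi ?_
  exact apply_eq_of_mem_closure_fixingReflections cs f x₀ ((Subgroup.eq_top_iff' H).mp hH _)

end CoxeterSystem

namespace Diagram553

inductive Cell | one | a | b | ab | ba | ac
deriving DecidableEq

instance : Finite Cell :=
  (Fintype.ofList [.one, .a, .b, .ab, .ba, .ac] (by rintro (_ | _ | _ | _ | _ | _) <;> simp)).finite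

inductive Pendant | a | b
deriving DecidableEq

instance : Finite Pendant :=
  (Fintype.ofList [.a, .b] (by rintro (_ | _) <;> simp)).finite

/-- The point `inl (k, w)` is sent to the base point `inl (0, one)` by `(s b * s c) ^ k * w`,
where the cell name `w` spells a word in `s a`, `s b`, `s c`; the pendant point `inr (i, k, p)`
is sent there by `(s b * s c) ^ k * s p * s i`. -/
abbrev Point (m : ℕ) (E : Type*) : Type _ := (ZMod m × Cell) ⊕ (E × ZMod m × Pendant)

variable {m : ℕ} {E : Type*}

def actA : Point m E → Point m E
  | .inl (k, .one) => .inl (k, .a)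
  | .inl (k, .a) => .inl (k, .one)
  | .inl (k, .b) => .inl (k, .ba)
  | .inl (k, .ba) => .inl (k, .b)
  | v => v

def actB : Point m E → Point m E
  | .inl (k, .one) => .inl (k, .b)
  | .inl (k, .b) => .inl (k, .one)
  | .inl (k, .a) => .inl (k, .ab)
  | .inl (k, .ab) => .inl (k, .a)
  | v => v

def actC : Point m E → Point m E
  | .inl (k, .one) => .inl (k - 1, .b)
  | .inl (k, .b) => .inl (k + 1, .one)
  | .inl (k, .a) => .inl (k, .ac)
  | .inl (k, .ac) => .inl (k, .a)
  | v => v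

def actExtra [DecidableEq E] (i : E) : Point m E → Point m E
  | .inl (k, .a) => .inr (i, k, .a)
  | .inl (k, .b) => .inr (i, k, .b)
  | .inr (j, k, .a) => if j = i then .inl (k, .a) else .inr (j, k, .a)
  | .inr (j, k, .b) => if j = i then .inl (k, .b) else .inr (j, k, .b)
  | v => v

theorem actA_involutive : Function.Involutive (actA : Point m E → Point m E) := by
  rintro (⟨k, _ | _ | _ | _ | _ | _⟩ | _) <;> rfl

theorem actB_involutive : Function.Involutive (actB : Point m E → Point m E) := by
  rintro (⟨k, _ | _ | _ | _ | _ | _⟩ | _) <;> rfl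

theorem actC_involutive : Function.Involutive (actC : Point m E → Point m E) := by
  rintro (⟨k, _ | _ | _ | _ | _ | _⟩ | _) <;> simp [actC]

theorem actExtra_involutive [DecidableEq E] (i : E) :
    Function.Involutive (actExtra i : Point m E → Point m E) := by
  rintro (⟨k, c⟩ | ⟨l, k, p⟩)
  · cases c <;> simp [actExtra]
  · by_cases hli : l = i <;> cases p <;> simp [actExtra, hli]

def permA : Equiv.Perm (Point m E) := actA_involutive.toPerm
def permB : Equiv.Perm (Point m E) := actB_involutive.toPerm
def permC : Equiv.Perm (Point m E) := actC_involutive.toPerm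
def permExtra [DecidableEq E] (i : E) : Equiv.Perm (Point m E) := (actExtra_involutive i).toPerm

@[simp] theorem permA_apply (v : Point m E) : permA v = actA v := rfl
@[simp] theorem permB_apply (v : Point m E) : permB v = actB v := rfl
@[simp] theorem permC_apply (v : Point m E) : permC v = actC v := rfl
@[simp] theorem permExtra_apply [DecidableEq E] (i : E) (v : Point m E) :
    permExtra i v = actExtra i v := rfl

theorem permA_mul_permB_pow : (permA * permB : Equiv.Perm (Point m E)) ^ 5 = 1 := by
  ext v
  rcases v with ⟨k, _ | _ | _ | _ | _ | _⟩ | _ <;> rfl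

theorem permA_mul_permC_pow : (permA * permC : Equiv.Perm (Point m E)) ^ 5 = 1 := by
  ext v
  rcases v with ⟨k, _ | _ | _ | _ | _ | _⟩ | _ <;> simp [actA, actC, pow_succ]

def shift (t : ZMod m) : Point m E → Point m E
  | .inl (k, .one) => .inl (k - t, .one)
  | .inl (k, .b) => .inl (k + t, .b)
  | v => v

/-- `permB * permC` moves the `one`-cells down and the `b`-cells up the cycle by one step and
permutes `a`, `ac`, `ab` cyclically, so its cube is a pure shift. -/
theorem permB_mul_permC_pow_three_pow_apply (n : ℕ) (v : Point m E) :
    (((permB * permC : Equiv.Perm (Point m E)) ^ 3) ^ n) v = shift ((3 * n : ℕ) : ZMod m) v := by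
  induction n with
  | zero => rcases v with ⟨k, _ | _ | _ | _ | _ | _⟩ | _ <;> simp [shift]
  | succ n ih =>
    rw [pow_succ', Equiv.Perm.mul_apply, ih]
    rcases v with ⟨k, _ | _ | _ | _ | _ | _⟩ | _ <;> simp [actB, actC, shift, pow_succ] <;> ring

theorem permB_mul_permC_pow (hm : 3 ∣ m) : (permB * permC : Equiv.Perm (Point m E)) ^ m = 1 := by
  obtain ⟨n, hn⟩ := hm
  ext v
  have hpow : (permB * permC : Equiv.Perm (Point m E)) ^ m = ((permB * permC) ^ 3) ^ n := by
    rw [← pow_mul, ← hn]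
  rw [hpow, permB_mul_permC_pow_three_pow_apply, ← hn, ZMod.natCast_self]
  rcases v with ⟨k, _ | _ | _ | _ | _ | _⟩ | _ <;> simp [shift]

section Extra

variable [DecidableEq E]

theorem permExtra_mul_permA_pow (i : E) :
    (permExtra i * permA : Equiv.Perm (Point m E)) ^ 3 = 1 := by
  ext (⟨k, c⟩ | ⟨l, k, p⟩)
  · cases c <;> simp [actA, actExtra, pow_succ]
  · by_cases hli : l = i <;> cases p <;> simp [actA, actExtra, pow_succ, hli]

theorem permExtra_mul_permB_pow (i : E) :
    (permExtra i * permB : Equiv.Perm (Point m E)) ^ 3 = 1 := by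
  ext (⟨k, c⟩ | ⟨l, k, p⟩)
  · cases c <;> simp [actB, actExtra, pow_succ]
  · by_cases hli : l = i <;> cases p <;> simp [actB, actExtra, pow_succ, hli]

theorem permExtra_mul_permC_pow (i : E) :
    (permExtra i * permC : Equiv.Perm (Point m E)) ^ 3 = 1 := by
  ext (⟨k, c⟩ | ⟨l, k, p⟩)
  · cases c <;> simp [actC, actExtra, pow_succ]
  · by_cases hli : l = i <;> cases p <;> simp [actC, actExtra, pow_succ, hli]

theorem permExtra_mul_permExtra_pow {i j : E} (hij : i ≠ j) :
    (permExtra i * permExtra j : Equiv.Perm (Point m E)) ^ 3 = 1 := by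
  ext (⟨k, c⟩ | ⟨l, k, p⟩)
  · cases c <;> simp [actExtra, pow_succ, hij, hij.symm]
  · by_cases hli : l = i <;> by_cases hlj : l = j <;> cases p <;>
      simp [actExtra, pow_succ, hij, hij.symm, hli, hlj]

end Extra

section Coxeter

variable {B W : Type*} [Group W] {M : CoxeterMatrix B} {a b c : B}

abbrev Extra (a b c : B) : Type _ := {i : B // i ≠ a ∧ i ≠ b ∧ i ≠ c}

variable (cs : CoxeterSystem M W)

def rotation (b c : B) (k : ZMod (M b c)) : W := (cs.simple b * cs.simple c) ^ k.val

theorem rotation_add_one [NeZero (M b c)] (k : ZMod (M b c)) :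
    rotation cs b c (k + 1) = rotation cs b c k * (cs.simple b * cs.simple c) := by
  have hpow := cs.simple_mul_simple_pow b c
  rw [rotation, rotation, ZMod.val_add, ZMod.val_one_eq_one_mod, ← pow_eq_pow_mod _ hpow,
    pow_add, ← pow_eq_pow_mod _ hpow, pow_one]

def transversal (a b c : B) : Point (M b c) (Extra a b c) → W
  | .inl (k, .one) => rotation cs b c k
  | .inl (k, .a) => rotation cs b c k * cs.simple a
  | .inl (k, .b) => rotation cs b c k * cs.simple b
  | .inl (k, .ab) => rotation cs b c k * cs.simple a * cs.simple b
  | .inl (k, .ba) => rotation cs b c k * cs.simple b * cs.simple a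
  | .inl (k, .ac) => rotation cs b c k * cs.simple a * cs.simple c
  | .inr (i, k, .a) => rotation cs b c k * cs.simple a * cs.simple i
  | .inr (i, k, .b) => rotation cs b c k * cs.simple b * cs.simple i

theorem transversal_actA (v : Point (M b c) (Extra a b c)) (hv : actA v ≠ v) :
    transversal cs a b c (actA v) = transversal cs a b c v * cs.simple a := by
  rcases v with ⟨k, _ | _ | _ | _ | _ | _⟩ | _ <;>
    first | rfl | exact (cs.simple_mul_simple_cancel_right _).symm | exact absurd rfl hv

theorem transversal_actB (v : Point (M b c) (Extra a b c)) (hv : actB v ≠ v) :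
    transversal cs a b c (actB v) = transversal cs a b c v * cs.simple b := by
  rcases v with ⟨k, _ | _ | _ | _ | _ | _⟩ | _ <;>
    first | rfl | exact (cs.simple_mul_simple_cancel_right _).symm | exact absurd rfl hv

theorem transversal_actC [NeZero (M b c)] (v : Point (M b c) (Extra a b c)) (hv : actC v ≠ v) :
    transversal cs a b c (actC v) = transversal cs a b c v * cs.simple c := by
  rcases v with ⟨k, _ | _ | _ | _ | _ | _⟩ | _
  case inl.one =>
    show rotation cs b c (k - 1) * cs.simple b = rotation cs b c k * cs.simple c
    rw [← sub_add_cancel k 1, rotation_add_one, add_sub_cancel_right, ← mul_assoc,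
      cs.simple_mul_simple_cancel_right]
  case inl.b =>
    show rotation cs b c (k + 1) = rotation cs b c k * cs.simple b * cs.simple c
    rw [rotation_add_one, mul_assoc]
  all_goals first | rfl | exact (cs.simple_mul_simple_cancel_right _).symm | exact absurd rfl hv

variable [DecidableEq B]

variable (a b c) in
def genPerm (m : ℕ) (i : B) : Equiv.Perm (Point m (Extra a b c)) :=
  if ha : i = a then permA
  else if hb : i = b then permB
  else if hc : i = c then permC
  else permExtra ⟨i, ha, hb, hc⟩

variable {m : ℕ}

theorem genPerm_a : genPerm a b c m a = permA := by simp [genPerm]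

theorem genPerm_b (hab : a ≠ b) : genPerm a b c m b = permB := by
  simp [genPerm, hab.symm]

theorem genPerm_c (hac : a ≠ c) (hbc : b ≠ c) : genPerm a b c m c = permC := by
  simp [genPerm, hac.symm, hbc.symm]

theorem genPerm_extra (i : Extra a b c) : genPerm a b c m i = permExtra i := by
  simp [genPerm, i.2.1, i.2.2.1, i.2.2.2]

theorem genPerm_mul_self (i : B) : genPerm a b c m i * genPerm a b c m i = 1 := by
  unfold genPerm
  split_ifs
  exacts [Equiv.ext actA_involutive, Equiv.ext actB_involutive, Equiv.ext actC_involutive,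
    Equiv.ext (actExtra_involutive _)]

theorem genPerm_extra_mul_pow (hab : a ≠ b) (hac : a ≠ c) (hbc : b ≠ c) (i : Extra a b c) {j : B}
    (hij : (i : B) ≠ j) : (genPerm a b c m i * genPerm a b c m j) ^ 3 = 1 := by
  rw [genPerm_extra]
  by_cases ha : j = a
  · rw [ha, genPerm_a]; exact permExtra_mul_permA_pow i
  by_cases hb : j = b
  · rw [hb, genPerm_b hab]; exact permExtra_mul_permB_pow i
  by_cases hc : j = c
  · rw [hc, genPerm_c hac hbc]; exact permExtra_mul_permC_pow i
  rw [genPerm_extra ⟨j, ha, hb, hc⟩]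
  exact permExtra_mul_permExtra_pow fun h => hij (congrArg Subtype.val h)

theorem isLiftable_genPerm (hab : a ≠ b) (hac : a ≠ c) (hbc : b ≠ c) (hMab : 5 ∣ M a b)
    (hMac : 5 ∣ M a c) (hMbc : 3 ∣ M b c)
    (hextra : ∀ i j : B, i ≠ j → i ≠ a → i ≠ b → i ≠ c → M i j = 0 ∨ 3 ∣ M i j) :
    M.IsLiftable (genPerm a b c (M b c)) := by
  have hextra_pow : ∀ i j : B, i ≠ j → ¬(i = a ∨ i = b ∨ i = c) →
      (genPerm a b c (M b c) i * genPerm a b c (M b c) j) ^ M i j = 1 := by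
    intro i j hij hi
    simp only [not_or] at hi
    exact pow_eq_one_of_dvd_or_eq_zero (genPerm_extra_mul_pow hab hac hbc ⟨i, hi⟩ hij)
      (hextra i j hij hi.1 hi.2.1 hi.2.2)
  have hab_pow : (genPerm a b c (M b c) a * genPerm a b c (M b c) b) ^ M a b = 1 := by
    rw [genPerm_a, genPerm_b hab]
    exact pow_eq_one_of_dvd_or_eq_zero permA_mul_permB_pow (.inr hMab)
  have hac_pow : (genPerm a b c (M b c) a * genPerm a b c (M b c) c) ^ M a c = 1 := by
    rw [genPerm_a, genPerm_c hac hbc]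
    exact pow_eq_one_of_dvd_or_eq_zero permA_mul_permC_pow (.inr hMac)
  have hbc_pow : (genPerm a b c (M b c) b * genPerm a b c (M b c) c) ^ M b c = 1 := by
    rw [genPerm_b hab, genPerm_c hac hbc]
    exact permB_mul_permC_pow hMbc
  intro i j
  obtain rfl | hij := eq_or_ne i j
  · rw [M.diagonal, pow_one]
    exact genPerm_mul_self i
  by_cases hi : i = a ∨ i = b ∨ i = c
  · by_cases hj : j = a ∨ j = b ∨ j = c
    · rcases hi with rfl | rfl | rfl <;> rcases hj with rfl | rfl | rfl <;>
        first
        | exact absurd rfl hij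
        | assumption
        | (rw [M.symmetric i j]; exact mul_pow_eq_one_comm ‹_›)
    · rw [M.symmetric i j]
      exact mul_pow_eq_one_comm (hextra_pow j i hij.symm hj)
  · exact hextra_pow i j hij hi

theorem transversal_actExtra (i : Extra a b c) (v : Point (M b c) (Extra a b c))
    (hv : actExtra i v ≠ v) :
    transversal cs a b c (actExtra i v) = transversal cs a b c v * cs.simple i := by
  rcases v with ⟨k, cell⟩ | ⟨j, k, p⟩
  · cases cell <;> first | rfl | exact absurd rfl hv
  · by_cases hji : j = i
    · subst hji
      cases p <;> simp [actExtra, transversal]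
    · cases p <;> exact absurd (by simp [actExtra, hji]) hv

theorem transversal_genPerm [NeZero (M b c)] (i : B) (v : Point (M b c) (Extra a b c))
    (hv : genPerm a b c (M b c) i v ≠ v) :
    transversal cs a b c (genPerm a b c (M b c) i v) = transversal cs a b c v * cs.simple i := by
  unfold genPerm at hv ⊢
  split_ifs at hv ⊢ with ha hb hc
  · subst ha
    exact transversal_actA cs v hv
  · subst hb
    exact transversal_actB cs v hv
  · subst hc
    exact transversal_actC cs v hv
  · exact transversal_actExtra cs ⟨i, ha, hb, hc⟩ v hv

end Coxeter

end Diagram553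

open Diagram553 in
theorem statement5_general {B : Type*} [Finite B] {M : CoxeterMatrix B} {W : Type*} [Group W]
    (cs : CoxeterSystem M W)
    (a b c : B) (hab : a ≠ b) (hac : a ≠ c) (hbc : b ≠ c)
    (hMab5 : 5 ∣ M a b)
    (hMac5 : 5 ∣ M a c)
    (hMbc : M b c ≠ 0) (hMbc3 : 3 ∣ M b c)
    (hother : ∀ i j : B, i ≠ j →
      ¬ ((i = a ∧ j = b) ∨ (i = b ∧ j = a) ∨ (i = a ∧ j = c) ∨ (i = c ∧ j = a) ∨
         (i = b ∧ j = c) ∨ (i = c ∧ j = b)) →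
      M i j = 0 ∨ 3 ∣ M i j) :
    ∃ T : Set W, (∀ t ∈ T, cs.IsReflection t) ∧ 1 < (Subgroup.closure T).index := by
  classical
  have : NeZero (M b c) := ⟨hMbc⟩
  have hlift : M.IsLiftable (genPerm a b c (M b c)) :=
    isLiftable_genPerm hab hac hbc hMab5 hMac5 hMbc3
      fun i j hij ha hb hc => hother i j hij (by tauto)
  let f := cs.lift ⟨_, hlift⟩
  have hf : ∀ i, f (cs.simple i) = genPerm a b c (M b c) i := cs.lift_apply_simple hlift
  refine ⟨cs.fixingReflections f (.inl (0, .one)), fun t ht => ht.1, ?_⟩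
  refine cs.one_lt_index_closure_fixingReflections (w := transversal cs a b c) ?_ ?_ a ?_
  · simp [transversal, Diagram553.rotation]
  · intro i v hv
    rw [hf] at hv ⊢
    exact transversal_genPerm cs i v hv
  · rw [hf, genPerm_a]
    simp [actA]

/-- Suppose an odd-angled Coxeter system contains three distinct indices
`a, b, c` with `m a b`, `m a c` finite, divisible by 5 and not by 3, and `m b c` finite and
divisible by 3, while every other unordered pair `{i,j}` has `m i j` infinite (encoded `0`) or
divisible by 3.  Then `W` has a proper finite-index subgroup generated by reflections. -/
theorem statement5 {B : Type*} [Finite B] {M : CoxeterMatrix B} {W : Type*} [Group W]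
    (cs : CoxeterSystem M W)
    (hodd : ∀ i j : B, i ≠ j → M i j = 0 ∨ Odd (M i j))
    (a b c : B) (hab : a ≠ b) (hac : a ≠ c) (hbc : b ≠ c)
    (hMab : M a b ≠ 0) (hMab5 : 5 ∣ M a b) (hMab3 : ¬ (3 ∣ M a b))
    (hMac : M a c ≠ 0) (hMac5 : 5 ∣ M a c) (hMac3 : ¬ (3 ∣ M a c))
    (hMbc : M b c ≠ 0) (hMbc3 : 3 ∣ M b c)
    (hother : ∀ i j : B, i ≠ j →
      ¬ ((i = a ∧ j = b) ∨ (i = b ∧ j = a) ∨ (i = a ∧ j = c) ∨ (i = c ∧ j = a) ∨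
         (i = b ∧ j = c) ∨ (i = c ∧ j = b)) →
      M i j = 0 ∨ 3 ∣ M i j) :
    ∃ T : Set W, (∀ t ∈ T, cs.IsReflection t) ∧ 1 < (Subgroup.closure T).index :=
  statement5_general cs a b c hab hac hbc hMab5 hMac5 hMbc hMbc3 hother
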